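/- Let G and H be finite groups of odd order and τ : G → H a half-isomorphism. Then τ is an isomorphism or an anti-isomorphism, and in particular H is isomorphic to G. -/

import Mathlib

/-!
Commuting elements have commuting images under a half-homomorphism `f`, so when `f` is
injective a non-commuting pair `(x, y)` is multiplied in the same order as `(y, x)`, and
`f (x * y * x) = f x * f y * f x`. Comparing the bracketings of `f (u * v * w * v)` shows that a
pair multiplied in order and a pair multiplied in reverse order never share an element. So if
`(a, b)` is a non-commuting pair multiplied in order, `a` is so multiplied with every element on
its right and `b` with every element on its left; symmetrically for a reversed pair `(c, d)`. The
two bracketings of `a * c * (b * d)` then force `f a, f b` or `f c, f d` to commute.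
-/

def IsHalfHom {G H : Type*} [Mul G] [Mul H] (f : G → H) : Prop :=
  ∀ x y, f (x * y) = f x * f y ∨ f (x * y) = f y * f x

namespace IsHalfHom

variable {G H : Type*} [Group G] [Group H] {f : G → H}

theorem map_mul_self (hf : IsHalfHom f) (x : G) : f (x * x) = f x * f x :=
  (hf x x).elim id id

theorem map_mul_mul_self (hf : IsHalfHom f) {x y : G} (h : f (x * y) = f x * f y) :
    f (x * y * y) = f x * f y * f y := by
  rcases hf (x * y) y with h₁ | h₁
  · rwa [h] at h₁
  rcases hf x (y * y) with h₂ | h₂ <;> rw [← mul_assoc, h₁, h, hf.map_mul_self] at h₂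
  · rw [h₁, h, h₂, mul_assoc]
  · have hc : f x * f y = f y * f x := by simpa only [mul_assoc, mul_right_inj] using h₂
    rw [h₁, h, ← mul_assoc, ← hc]

theorem map_commute (hf : IsHalfHom f) {x y : G} (hxy : Commute x y) :
    Commute (f x) (f y) := by
  suffices key : ∀ {x y : G}, Commute x y → f (x * y) = f x * f y → Commute (f x) (f y) by
    rcases hf x y with h | h
    · exact key hxy h
    · exact (key hxy.symm (hxy.eq ▸ h)).symm
  intro x y hxy h
  have hsq : f (x * (x * y * y)) = f x * f y * (f x * f y) := by
    rw [← h, ← hf.map_mul_self, ← hxy.mul_mul_mul_comm, mul_assoc, mul_assoc]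
  rcases hf x (x * y * y) with h' | h' <;> rw [h', hf.map_mul_mul_self h] at hsq
  · simp only [mul_assoc, mul_right_inj] at hsq
    simp only [← mul_assoc, mul_left_inj] at hsq
    exact hsq
  · simp only [mul_assoc, mul_right_inj] at hsq
    exact hsq.symm

theorem map_mul_swap (hf : IsHalfHom f) (hinj : Function.Injective f) {x y : G}
    (hne : ¬Commute (f x) (f y)) (h : f (x * y) = f x * f y) : f (y * x) = f y * f x :=
  (hf y x).resolve_right fun h' => hne (hf.map_commute (hinj (h.trans h'.symm)))

theorem map_mul_swap_rev (hf : IsHalfHom f) (hinj : Function.Injective f) {x y : G}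
    (hne : ¬Commute (f x) (f y)) (h : f (x * y) = f y * f x) : f (y * x) = f x * f y :=
  (hf y x).resolve_left fun h' =>
    hne ((hf.map_mul_swap hinj (fun hc => hne hc.symm) h').symm.trans h)

theorem map_jordan_triple (hf : IsHalfHom f) (hinj : Function.Injective f) (x y : G) :
    f (x * y * x) = f x * f y * f x := by
  have hassoc : f (x * y * x) = f (x * (y * x)) := by rw [mul_assoc]
  by_cases hc : Commute (f x) (f y)
  · rcases hf (x * y) x with h | h <;> rcases hf x y with h' | h' <;> rw [h, h']
    · rw [hc.eq]
    · rw [← mul_assoc, hc.right_comm]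
    · rw [mul_assoc]
  -- if `f x * f x * f y = f y * f x * f x`, that is also the value of `f (x * x * y)`
  have key : f (x * y * x) = f x * f x * f y → f (x * y * x) = f y * f x * f x → False := by
    intro h₁ h₂
    have h₃ : f (x * x * y) = f (x * y * x) := by
      rcases hf (x * x) y with h | h
      · rw [h, hf.map_mul_self, h₁]
      · rw [h, hf.map_mul_self, h₂, mul_assoc]
    have h₄ := hinj h₃
    simp only [mul_assoc, mul_right_inj] at h₄
    exact hc (hf.map_commute h₄)
  rcases hf x y with hxy | hxy
  · have hyx := hf.map_mul_swap hinj hc hxy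
    rcases hf (x * y) x with h | h
    · rw [h, hxy]
    rcases hf x (y * x) with h' | h' <;> rw [← hassoc, hyx] at h'
    · rw [h', mul_assoc]
    · rw [hxy, ← mul_assoc] at h
      exact (key h h').elim
  · have hyx := hf.map_mul_swap_rev hinj hc hxy
    rcases hf (x * y) x with h | h
    · rcases hf x (y * x) with h' | h' <;> rw [← hassoc, hyx] at h'
      · rw [hxy] at h
        rw [← mul_assoc] at h'
        exact (key h' h).elim
      · exact h'
    · rw [h, hxy, mul_assoc]

theorem map_mul_mul_eq_or_of_not_commute (hf : IsHalfHom f) {u v w : G}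
    (huv : f (u * v) = f u * f v) (hvw : f (v * w) = f w * f v)
    (hne₁ : ¬Commute (f u) (f v)) (hne₂ : ¬Commute (f v) (f w)) :
    f (u * v * w) = f u * f v * f w ∧ f u * f v * f w = f w * f v * f u ∨
      f (u * v * w) = f w * f u * f v ∧ Commute (f u) (f w) := by
  rcases hf (u * v) w with h | h <;> rcases hf u (v * w) with h' | h' <;>
    rw [← mul_assoc, h] at h' <;> rw [huv] at h h' <;> rw [hvw] at h'
  · exact (hne₂ (by simpa only [commute_iff_eq, mul_assoc, mul_right_inj] using h')).elim
  · exact Or.inl ⟨h, by rw [h', mul_assoc]⟩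
  · simp only [← mul_assoc, mul_left_inj] at h'
    exact Or.inr ⟨by rw [h, mul_assoc], h'.symm⟩
  · exact (hne₁ (by simpa only [commute_iff_eq, mul_assoc, mul_right_inj] using h')).elim

theorem commute_or_commute_of_map_mul (hf : IsHalfHom f) (hinj : Function.Injective f)
    {u v w : G} (huv : f (u * v) = f u * f v) (hvw : f (v * w) = f w * f v) :
    Commute (f u) (f v) ∨ Commute (f v) (f w) := by
  by_contra! ⟨hne₁, hne₂⟩
  have e₁ : f (u * v * w * v) = f u * (f v * f w * f v) ∨
      f (u * v * w * v) = f v * f w * f v * f u := by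
    have := hf u (v * w * v)
    rwa [hf.map_jordan_triple hinj, ← mul_assoc, ← mul_assoc] at this
  have e₂ : f (u * v * w * v) = f u * f v * (f v * f w) ∨
      f (u * v * w * v) = f v * f w * (f u * f v) := by
    have := hf (u * v) (w * v)
    rwa [huv, hf.map_mul_swap_rev hinj hne₂ hvw, ← mul_assoc] at this
  have e₃ := hf (u * v * w) v
  rcases hf.map_mul_mul_eq_or_of_not_commute huv hvw hne₁ hne₂ with
    ⟨h, hrev⟩ | ⟨h, hcomm⟩
  · rw [h] at e₃
    rcases e₂ with h₂ | h₂ <;> rcases e₃ with h₃ | h₃ <;> rw [h₂] at h₃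
    · exact hne₂ (by simpa only [commute_iff_eq, mul_assoc, mul_right_inj] using h₃)
    · exact hne₁ (by simpa only [commute_iff_eq, ← mul_assoc, mul_left_inj] using h₃)
    · exact hne₂ (by simpa only [commute_iff_eq, hrev, ← mul_assoc, mul_left_inj] using h₃)
    · exact hne₁ (by simpa only [commute_iff_eq, hrev, mul_assoc, mul_right_inj] using h₃)
  · rw [h] at e₃
    have h₁ : f (u * v * w * v) = f v * f w * f v * f u := by
      refine e₁.resolve_left fun h₁ => e₂.elim (fun h₂ => ?_) (fun h₂ => ?_) <;>
        rw [h₁] at h₂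
      · exact hne₂ (by simpa only [commute_iff_eq, mul_assoc, mul_right_inj] using h₂.symm)
      · simp only [← mul_assoc, mul_left_inj] at h₂
        rw [mul_assoc _ (f w), ← hcomm.eq, ← mul_assoc, mul_left_inj] at h₂
        exact hne₁ h₂
    have h₂ : f (u * v * w * v) = f u * f v * (f v * f w) :=
      e₂.resolve_right fun h₂ => hne₁ <| by
        simpa only [commute_iff_eq, mul_assoc, mul_right_inj] using h₂.symm.trans h₁
    have h₃ : f (u * v * w * v) = f w * f u * f v * f v :=
      e₃.resolve_right fun h₃ => hne₁ <| by
        simpa only [commute_iff_eq, mul_assoc, mul_right_inj] using h₃.symm.trans h₁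
    -- both candidate values of `f (u * v * v * w)` now equal `f (u * v * w * v)`
    have hne : f (u * v * v * w) ≠ f (u * v * w * v) := fun h =>
      hne₂ <| hf.map_commute <| by
        simpa only [commute_iff_eq, mul_assoc, mul_right_inj] using hinj h
    refine hne ?_
    rcases hf (u * v * v) w with h₄ | h₄ <;> rw [h₄, hf.map_mul_mul_self huv]
    · rw [h₂, mul_assoc]
    · rw [h₃]
      simp only [mul_assoc]

theorem forall_map_mul_of_not_commute (hf : IsHalfHom f) (hinj : Function.Injective f)
    {u v : G} (huv : f (u * v) = f u * f v) (hne : ¬Commute (f u) (f v)) :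
    (∀ x, f (u * x) = f u * f x) ∧ ∀ x, f (x * v) = f x * f v := by
  constructor
  · intro x
    refine (hf u x).elim id fun hux => ?_
    rcases hf.commute_or_commute_of_map_mul hinj (hf.map_mul_swap hinj hne huv) hux with h | h
    · exact absurd h.symm hne
    · exact hux.trans h.eq.symm
  · intro x
    refine (hf x v).elim id fun hxv => ?_
    by_cases hc : Commute (f x) (f v)
    · exact hxv.trans hc.eq.symm
    rcases hf.commute_or_commute_of_map_mul hinj huv (hf.map_mul_swap_rev hinj hc hxv) with h | h
    · exact absurd h hne
    · exact absurd h.symm hc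

theorem op_comp (hf : IsHalfHom f) : IsHalfHom (MulOpposite.op ∘ f) := fun x y => by
  simp only [Function.comp_apply, ← MulOpposite.op_mul, MulOpposite.op_inj]
  exact (hf x y).symm

theorem forall_map_mul_rev_of_not_commute (hf : IsHalfHom f) (hinj : Function.Injective f)
    {u v : G} (huv : f (u * v) = f v * f u) (hne : ¬Commute (f u) (f v)) :
    (∀ x, f (u * x) = f x * f u) ∧ ∀ x, f (x * v) = f v * f x := by
  have := hf.op_comp.forall_map_mul_of_not_commute (MulOpposite.op_injective.comp hinj)
    (u := u) (v := v) (by simp [huv]) (by simpa [MulOpposite.commute_op] using hne)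
  simpa [← MulOpposite.op_mul] using this

theorem commute_or_commute_of_forall_map_mul (hf : IsHalfHom f) {a b c d : G}
    (ha : ∀ x, f (a * x) = f a * f x) (hb : ∀ x, f (x * b) = f x * f b)
    (hc : ∀ x, f (c * x) = f x * f c) (hd : ∀ x, f (x * d) = f d * f x) :
    Commute (f a) (f b) ∨ Commute (f c) (f d) := by
  have had : Commute (f a) (f d) := (ha d).symm.trans (hd a)
  have hcb : Commute (f c) (f b) := (hb c).symm.trans (hc b)
  have key : f (a * c * (b * d)) = f a * (f d * f b * f c) := by
    rw [mul_assoc, ha, hc, hd]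
  rcases hf (a * c) (b * d) with h | h <;> rw [h, ha, hd] at key
  · right
    simp only [mul_assoc, mul_right_inj] at key
    rw [← hcb.eq, ← mul_assoc, ← mul_assoc, mul_left_inj] at key
    exact key
  · left
    simp only [← mul_assoc, mul_left_inj] at key
    rw [had.eq, mul_assoc, mul_assoc, mul_right_inj] at key
    exact key.symm

theorem isHom_or_isAntiHom (hf : IsHalfHom f) (hinj : Function.Injective f) :
    (∀ x y, f (x * y) = f x * f y) ∨ ∀ x y, f (x * y) = f y * f x := by
  by_contra! ⟨⟨u, v, huv⟩, ⟨p, q, hpq⟩⟩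
  have huv' : f (u * v) = f v * f u := (hf u v).resolve_left huv
  have hpq' : f (p * q) = f p * f q := (hf p q).resolve_right hpq
  have hne₁ : ¬Commute (f p) (f q) := fun h => hpq (hpq'.trans h.eq)
  have hne₂ : ¬Commute (f u) (f v) := fun h => huv (huv'.trans h.eq.symm)
  obtain ⟨hp, hq⟩ := hf.forall_map_mul_of_not_commute hinj hpq' hne₁
  obtain ⟨hu, hv⟩ := hf.forall_map_mul_rev_of_not_commute hinj huv' hne₂
  exact (hf.commute_or_commute_of_forall_map_mul hp hq hu hv).elim hne₁ hne₂

end IsHalfHom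

theorem half_isomorphism_odd_order_general {G H : Type*} [Group G] [Group H] (τ : G → H)
    (hbij : Function.Bijective τ)
    (hhalf : ∀ x y : G, τ (x * y) = τ x * τ y ∨ τ (x * y) = τ y * τ x) :
    ((∀ x y : G, τ (x * y) = τ x * τ y) ∨ (∀ x y : G, τ (x * y) = τ y * τ x)) ∧
      Nonempty (G ≃* H) := by
  have hdich := IsHalfHom.isHom_or_isAntiHom (f := τ) hhalf hbij.injective
  refine ⟨hdich, ?_⟩
  rcases hdich with hhom | hanti
  · exact ⟨MulEquiv.mk' (Equiv.ofBijective τ hbij) hhom⟩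
  · refine ⟨MulEquiv.mk' ((Equiv.ofBijective τ hbij).trans (Equiv.inv H)) fun x y => ?_⟩
    simp [hanti, mul_inv_rev]

/-- A half-isomorphism between finite groups of odd order is an isomorphism or
an anti-isomorphism; in particular the groups are isomorphic. -/
theorem half_isomorphism_odd_order {G H : Type*} [Group G] [Group H]
    [Fintype G] [Fintype H]
    (hG : Odd (Fintype.card G)) (hH : Odd (Fintype.card H)) (τ : G → H)
    (hbij : Function.Bijective τ)
    (hhalf : ∀ x y : G, τ (x * y) = τ x * τ y ∨ τ (x * y) = τ y * τ x) :
    ((∀ x y : G, τ (x * y) = τ x * τ y) ∨ (∀ x y : G, τ (x * y) = τ y * τ x)) ∧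
      Nonempty (G ≃* H) :=
  half_isomorphism_odd_order_general τ hbij hhalf
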